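/- arXiv:1203.1414 — 2 statements merged into one kernel-verified Lean document; each statement's English description precedes it below -/
import Mathlib

section
/- Let 0 < 1/p < α < 1. Every u ∈ E_{α,p} admits a continuous representative vanishing at a, and the embedding E_{α,p} ↪ C([a,b];ℝ^d) is continuous: ‖u‖_∞ ≤ ((b-a)^{α-1/p} / (Γ(α)((α-1)q+1)^{1/q})) ‖D^α_- u‖_{L^p}, where q = p/(p-1). -/
open MeasureTheory Set

noncomputable section

variable {V : Type*} [NormedAddCommGroup V] [NormedSpace ℝ V]

/-- Left Riemann-Liouville fractional integral of order `α` with inferior limit `a`: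
`I^α_- f (t) = (1/Γ(α)) ∫_a^t (t-ξ)^(α-1) f(ξ) dξ`. -/
def Ileft (a α : ℝ) (f : ℝ → V) (t : ℝ) : V :=
  (Real.Gamma α)⁻¹ • ∫ ξ in a..t, ((t - ξ) ^ (α - 1)) • f ξ

/-- Left Riemann-Liouville fractional derivative of order `α`:
`D^α_- f = (d/dt) (I^{1-α}_- f)`. -/
def Dleft (a α : ℝ) (f : ℝ → V) (t : ℝ) : V :=
  deriv (Ileft a (1 - α) f) t

/-- Right Riemann-Liouville fractional integral of order `α` with superior limit `b`. -/
def Iright (b α : ℝ) (f : ℝ → V) (t : ℝ) : V :=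
  (Real.Gamma α)⁻¹ • ∫ ξ in t..b, ((ξ - t) ^ (α - 1)) • f ξ

/-- Right Riemann-Liouville fractional derivative of order `α`:
`D^α_+ f = -(d/dt) (I^{1-α}_+ f)`. -/
def Dright (b α : ℝ) (f : ℝ → V) (t : ℝ) : V :=
  - deriv (Iright b (1 - α) f) t

/-- Lebesgue measure restricted to the interval `(a,b)`. -/
def μab (a b : ℝ) : Measure ℝ := (volume : Measure ℝ).restrict (Set.Ioo a b)

/-- The `L^p((a,b))` norm, as a real number. -/
def LpNorm (p a b : ℝ) (f : ℝ → V) : ℝ :=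
  (eLpNorm f (ENNReal.ofReal p) (μab a b)).toReal

/-- Membership in the space `E_{α,p}`: `u ∈ L^p`, `D^α_- u ∈ L^p` and `I^α_-(D^α_- u) = u` a.e. -/
def MemE (a b α p : ℝ) (u : ℝ → V) : Prop :=
  MemLp u (ENNReal.ofReal p) (μab a b) ∧
  MemLp (Dleft a α u) (ENNReal.ofReal p) (μab a b) ∧
  ∀ᵐ t ∂(μab a b), Ileft a α (Dleft a α u) t = u t

/-!
The continuous representative is `I^α_- f` itself, `f = D^α_- u`. For `a ≤ s ≤ t ≤ b`,
`Γ(α) (I^α_- f (t) - I^α_- f (s))` is the integral of `(t - ξ)^(α-1) f` over `[s, t]` plus the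
integral of `((t - ξ)^(α-1) - (s - ξ)^(α-1)) f` over `[a, s]`. By Hölder each term is at most
`‖f‖_p` times the `L^q` norm of its kernel, and both kernels have `L^q` norm at most
`(t - s)^(α - 1/p) / ((α - 1) q + 1)^(1/q)`: the first by direct integration, which converges
because `α > 1/p` means `(α - 1) q > -1`; the second because `(x - y)^q ≤ x^q - y^q` for
`0 ≤ y ≤ x` and `q ≥ 1`. So `I^α_- f` is `(α - 1/p)`-Hölder on `[a, b]`, and the first term
with `s = a` is the sup bound.
-/

open MeasureTheory Set intervalIntegral
open scoped ENNReal NNReal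

lemma enorm_integral_smul_le {X E : Type*} [MeasurableSpace X] {μ : Measure X}
    [NormedAddCommGroup E] [NormedSpace ℝ E] {p q : ℝ≥0∞} [q.HolderConjugate p]
    {φ : X → ℝ} {f : X → E} (hφ : AEStronglyMeasurable φ μ)
    (hf : AEStronglyMeasurable f μ) :
    ‖∫ x, φ x • f x ∂μ‖ₑ ≤ eLpNorm φ q μ * eLpNorm f p μ :=
  calc ‖∫ x, φ x • f x ∂μ‖ₑ ≤ eLpNorm (φ • f) 1 μ := by
        rw [eLpNorm_one_eq_lintegral_enorm]
        exact enorm_integral_le_lintegral_enorm _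
    _ ≤ eLpNorm φ q μ * eLpNorm f p μ := eLpNorm_smul_le_mul_eLpNorm hf hφ

lemma eLpNorm_ofReal_le_of_lintegral_le {X : Type*} [MeasurableSpace X] {μ : Measure X}
    {φ : X → ℝ} {q B : ℝ} (hq : 0 < q) (hB : 0 ≤ B)
    (h : ∫⁻ x, ENNReal.ofReal (|φ x| ^ q) ∂μ ≤ ENNReal.ofReal B) :
    eLpNorm φ (ENNReal.ofReal q) μ ≤ ENNReal.ofReal (B ^ (1 / q)) := by
  rw [eLpNorm_eq_lintegral_rpow_enorm_toReal (by simpa using hq) ENNReal.ofReal_ne_top,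
    ENNReal.toReal_ofReal hq.le, ← ENNReal.ofReal_rpow_of_nonneg hB (by positivity)]
  refine ENNReal.rpow_le_rpow (le_of_eq_of_le (lintegral_congr fun x => ?_) h) (by positivity)
  rw [Real.enorm_eq_ofReal_abs, ENNReal.ofReal_rpow_of_nonneg (abs_nonneg _) hq.le]

lemma holderOnWith_of_dist_le {X Y : Type*} [PseudoMetricSpace X] [PseudoMetricSpace Y]
    {C r : ℝ≥0} {f : X → Y} {s : Set X}
    (h : ∀ x ∈ s, ∀ y ∈ s, dist (f x) (f y) ≤ C * dist x y ^ (r : ℝ)) :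
    HolderOnWith C r f s := by
  intro x hx y hy
  rw [edist_dist, edist_dist, ENNReal.ofReal_rpow_of_nonneg dist_nonneg r.coe_nonneg,
    ← ENNReal.ofReal_coe_nnreal, ← ENNReal.ofReal_mul C.coe_nonneg]
  exact ENNReal.ofReal_le_ofReal (h x hx y hy)

lemma Real.HolderConjugate.sub_one_add_one_div {p q : ℝ} (hpq : p.HolderConjugate q) (α : ℝ) :
    α - 1 + 1 / q = α - 1 / p := by
  have := hpq.inv_add_inv_eq_one
  rw [one_div, one_div]
  linarith

lemma Real.HolderConjugate.neg_one_lt_sub_one_mul {p q α : ℝ} (hpq : p.HolderConjugate q)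
    (hpα : 1 / p < α) : -1 < (α - 1) * q := by
  have h : (α - 1) * q + 1 = (α - 1 / p) * q := by
    rw [← hpq.sub_one_add_one_div, add_mul, one_div_mul_cancel hpq.symm.ne_zero]
  have := mul_pos (sub_pos.2 hpα) hpq.symm.pos
  linarith

lemma Real.HolderConjugate.Gamma_mul_rpow_pos {p q α : ℝ} (hpq : p.HolderConjugate q)
    (hpα : 1 / p < α) : 0 < Real.Gamma α * ((α - 1) * q + 1) ^ (1 / q) :=
  mul_pos (Real.Gamma_pos_of_pos ((one_div_pos.2 hpq.pos).trans hpα))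
    (Real.rpow_pos_of_pos (by linarith [hpq.neg_one_lt_sub_one_mul hpα]) _)

section Kernel

variable {ρ γ q c d s t : ℝ}

lemma intervalIntegrable_sub_rpow (hρ : -1 < ρ) (t c d : ℝ) :
    IntervalIntegrable (fun ξ : ℝ => (t - ξ) ^ ρ) volume c d := by
  simpa using (intervalIntegrable_rpow' hρ (a := t - c) (b := t - d)).comp_sub_left t

lemma integral_sub_rpow (hρ : -1 < ρ) (t c d : ℝ) :
    ∫ ξ in c..d, (t - ξ) ^ ρ = ((t - c) ^ (ρ + 1) - (t - d) ^ (ρ + 1)) / (ρ + 1) := by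
  rw [intervalIntegral.integral_comp_sub_left (fun x : ℝ => x ^ ρ) t, integral_rpow (Or.inl hρ)]

lemma lintegral_Ioc_sub_rpow (hρ : -1 < ρ) (hcd : c ≤ d) (hdt : d ≤ t) :
    ∫⁻ ξ in Ioc c d, ENNReal.ofReal ((t - ξ) ^ ρ) =
      ENNReal.ofReal (((t - c) ^ (ρ + 1) - (t - d) ^ (ρ + 1)) / (ρ + 1)) := by
  have hnonneg : 0 ≤ᵐ[volume.restrict (Ioc c d)] fun ξ => (t - ξ) ^ ρ := by
    filter_upwards [ae_restrict_mem measurableSet_Ioc] with ξ hξ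
    exact Real.rpow_nonneg (by linarith [hξ.2]) _
  rw [← ofReal_integral_eq_lintegral_ofReal
    ((intervalIntegrable_sub_rpow hρ t c d).1) hnonneg,
    ← intervalIntegral.integral_of_le hcd, integral_sub_rpow hρ]

lemma rpow_div_self_rpow_one_div (hq : 0 < q) (hm : 0 < γ * q + 1) {x : ℝ} (hx : 0 ≤ x) :
    (x ^ (γ * q + 1) / (γ * q + 1)) ^ (1 / q) = x ^ (γ + 1 / q) / (γ * q + 1) ^ (1 / q) := by
  rw [Real.div_rpow (by positivity) hm.le, ← Real.rpow_mul hx]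
  congr 2
  field_simp

lemma eLpNorm_sub_rpow_Ioc_le (hq : 0 < q) (hγ : -1 < γ * q) (hcd : c ≤ d) (hdt : d ≤ t) :
    eLpNorm (fun ξ => (t - ξ) ^ γ) (ENNReal.ofReal q) (volume.restrict (Ioc c d)) ≤
      ENNReal.ofReal ((t - c) ^ (γ + 1 / q) / (γ * q + 1) ^ (1 / q)) := by
  have hm : 0 < γ * q + 1 := by linarith
  have hct : 0 ≤ t - c := by linarith
  rw [← rpow_div_self_rpow_one_div hq hm hct]
  refine eLpNorm_ofReal_le_of_lintegral_le hq (by positivity) ?_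
  calc ∫⁻ ξ in Ioc c d, ENNReal.ofReal (|(t - ξ) ^ γ| ^ q)
      = ∫⁻ ξ in Ioc c d, ENNReal.ofReal ((t - ξ) ^ (γ * q)) := by
        refine setLIntegral_congr_fun measurableSet_Ioc fun ξ hξ => ?_
        have htξ : 0 ≤ t - ξ := by linarith [hξ.2]
        rw [abs_of_nonneg (Real.rpow_nonneg htξ _), ← Real.rpow_mul htξ]
    _ = ENNReal.ofReal (((t - c) ^ (γ * q + 1) - (t - d) ^ (γ * q + 1)) / (γ * q + 1)) :=
        lintegral_Ioc_sub_rpow hγ hcd hdt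
    _ ≤ ENNReal.ofReal ((t - c) ^ (γ * q + 1) / (γ * q + 1)) := by
        gcongr
        exact sub_le_self _ (Real.rpow_nonneg (by linarith) _)

lemma abs_rpow_sub_rpow_rpow_le {x y : ℝ} (hq : 1 ≤ q) (hγ0 : γ ≤ 0) (hx : 0 < x)
    (hxy : x ≤ y) : |y ^ γ - x ^ γ| ^ q ≤ x ^ (γ * q) - y ^ (γ * q) := by
  have hy : 0 ≤ y := hx.le.trans hxy
  have hle : y ^ γ ≤ x ^ γ := Real.rpow_le_rpow_of_nonpos hx hxy hγ0
  have key := Real.add_rpow_le_rpow_add (sub_nonneg.2 hle) (Real.rpow_nonneg hy γ) hq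
  rw [sub_add_cancel, ← Real.rpow_mul hx.le, ← Real.rpow_mul hy] at key
  rw [abs_sub_comm, abs_of_nonneg (sub_nonneg.2 hle)]
  exact le_sub_right_of_add_le key

lemma eLpNorm_sub_rpow_sub_sub_rpow_Ioc_le (hq : 1 ≤ q) (hγ0 : γ ≤ 0) (hγ : -1 < γ * q)
    (hcs : c ≤ s) (hst : s ≤ t) :
    eLpNorm (fun ξ => (t - ξ) ^ γ - (s - ξ) ^ γ) (ENNReal.ofReal q)
        (volume.restrict (Ioc c s)) ≤
      ENNReal.ofReal ((t - s) ^ (γ + 1 / q) / (γ * q + 1) ^ (1 / q)) := by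
  have hq0 : 0 < q := by linarith
  have hm : 0 < γ * q + 1 := by linarith
  rw [← rpow_div_self_rpow_one_div hq0 hm (sub_nonneg.2 hst)]
  refine eLpNorm_ofReal_le_of_lintegral_le hq0 (by positivity) ?_
  have hpointwise : ∀ ξ ∈ Ioo c s,
      |(t - ξ) ^ γ - (s - ξ) ^ γ| ^ q ≤ (s - ξ) ^ (γ * q) - (t - ξ) ^ (γ * q) :=
    fun ξ hξ => abs_rpow_sub_rpow_rpow_le hq hγ0 (by linarith [hξ.2]) (by linarith)
  -- `Ioo` rather than `Ioc`: at `ξ = s` the junk value `0 ^ γ = 0` breaks `hpointwise`.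
  calc ∫⁻ ξ in Ioc c s, ENNReal.ofReal (|(t - ξ) ^ γ - (s - ξ) ^ γ| ^ q)
      = ∫⁻ ξ in Ioo c s, ENNReal.ofReal (|(t - ξ) ^ γ - (s - ξ) ^ γ| ^ q) := by
        rw [Measure.restrict_congr_set Ioo_ae_eq_Ioc]
    _ ≤ ∫⁻ ξ in Ioo c s, ENNReal.ofReal ((s - ξ) ^ (γ * q) - (t - ξ) ^ (γ * q)) :=
        setLIntegral_mono' measurableSet_Ioo fun ξ hξ =>
          ENNReal.ofReal_le_ofReal (hpointwise ξ hξ)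
    _ = ENNReal.ofReal (∫ ξ in c..s, ((s - ξ) ^ (γ * q) - (t - ξ) ^ (γ * q))) := by
        have hint := (intervalIntegrable_sub_rpow hγ s c s).sub
          (intervalIntegrable_sub_rpow hγ t c s)
        rw [intervalIntegral.integral_of_le hcs, ← Measure.restrict_congr_set Ioo_ae_eq_Ioc,
          ofReal_integral_eq_lintegral_ofReal]
        · exact hint.1.mono_set Ioo_subset_Ioc_self
        · filter_upwards [ae_restrict_mem measurableSet_Ioo] with ξ hξ
          exact (Real.rpow_nonneg (abs_nonneg _) q).trans (hpointwise ξ hξ)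
    _ = ENNReal.ofReal (((t - s) ^ (γ * q + 1) -
          ((t - c) ^ (γ * q + 1) - (s - c) ^ (γ * q + 1))) / (γ * q + 1)) := by
        rw [intervalIntegral.integral_sub (intervalIntegrable_sub_rpow hγ s c s)
          (intervalIntegrable_sub_rpow hγ t c s), integral_sub_rpow hγ, integral_sub_rpow hγ,
          sub_self, Real.zero_rpow hm.ne']
        congr 1
        ring
    _ ≤ ENNReal.ofReal ((t - s) ^ (γ * q + 1) / (γ * q + 1)) := by
        gcongr
        refine sub_le_self _ (sub_nonneg.2 ?_)
        exact Real.rpow_le_rpow (by linarith) (by linarith) hm.le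

end Kernel

section FractionalIntegral

variable {V : Type*} [NormedAddCommGroup V] {a b c d s t α p q : ℝ} {f : ℝ → V}

lemma eLpNorm_restrict_Ioc_le_μab {P : ℝ≥0∞} (hac : a ≤ c) (hdb : d ≤ b) :
    eLpNorm f P (volume.restrict (Ioc c d)) ≤ eLpNorm f P (μab a b) := by
  rw [μab, Measure.restrict_congr_set Ioo_ae_eq_Ioc]
  exact eLpNorm_mono_measure _ (Measure.restrict_mono (Ioc_subset_Ioc hac hdb) le_rfl)

lemma memLp_Ioc_of_μab {P : ℝ≥0∞} (hf : MemLp f P (μab a b)) (hac : a ≤ c)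
    (hdb : d ≤ b) : MemLp f P (volume.restrict (Ioc c d)) := by
  rw [μab, Measure.restrict_congr_set Ioo_ae_eq_Ioc] at hf
  exact hf.mono_measure (Measure.restrict_mono (Ioc_subset_Ioc hac hdb) le_rfl)

variable [NormedSpace ℝ V]

lemma norm_setIntegral_smul_le (hpq : p.HolderConjugate q)
    (hf : MemLp f (ENNReal.ofReal p) (μab a b)) (hac : a ≤ c) (hdb : d ≤ b) {φ : ℝ → ℝ}
    (hφ : AEStronglyMeasurable φ (volume.restrict (Ioc c d))) {K : ℝ} (hK : 0 ≤ K)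
    (hφK : eLpNorm φ (ENNReal.ofReal q) (volume.restrict (Ioc c d)) ≤ ENNReal.ofReal K) :
    ‖∫ ξ in Ioc c d, φ ξ • f ξ‖ ≤ K * LpNorm p a b f := by
  have := hpq.symm.ennrealOfReal
  have hfin : eLpNorm φ (ENNReal.ofReal q) (volume.restrict (Ioc c d)) *
      eLpNorm f (ENNReal.ofReal p) (volume.restrict (Ioc c d)) ≠ ⊤ :=
    ENNReal.mul_ne_top (ne_top_of_le_ne_top ENNReal.ofReal_ne_top hφK)
      (memLp_Ioc_of_μab hf hac hdb).2.ne
  rw [← toReal_enorm]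
  refine (ENNReal.toReal_mono hfin (enorm_integral_smul_le hφ
    (memLp_Ioc_of_μab hf hac hdb).1)).trans ?_
  rw [ENNReal.toReal_mul]
  exact mul_le_mul (ENNReal.toReal_le_of_le_ofReal hK hφK)
    (ENNReal.toReal_mono hf.2.ne (eLpNorm_restrict_Ioc_le_μab hac hdb)) ENNReal.toReal_nonneg hK

lemma integrableOn_Ioc_smul (hpq : p.HolderConjugate q)
    (hf : MemLp f (ENNReal.ofReal p) (μab a b)) (hac : a ≤ c) (hdb : d ≤ b) {φ : ℝ → ℝ}
    (hφ : MemLp φ (ENNReal.ofReal q) (volume.restrict (Ioc c d))) :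
    IntegrableOn (fun ξ => φ ξ • f ξ) (Ioc c d) := by
  have := hpq.symm.ennrealOfReal
  exact memLp_one_iff_integrable.1 ((memLp_Ioc_of_μab hf hac hdb).smul hφ)

lemma norm_integral_Ioc_rpow_smul_le (hpq : p.HolderConjugate q) (hpα : 1 / p < α)
    (hf : MemLp f (ENNReal.ofReal p) (μab a b)) (hac : a ≤ c) (hct : c ≤ t) (htb : t ≤ b) :
    ‖∫ ξ in Ioc c t, (t - ξ) ^ (α - 1) • f ξ‖ ≤
      (t - c) ^ (α - 1 / p) / ((α - 1) * q + 1) ^ (1 / q) * LpNorm p a b f := by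
  have hγ := hpq.neg_one_lt_sub_one_mul hpα
  have hkernel := eLpNorm_sub_rpow_Ioc_le hpq.symm.pos hγ hct le_rfl
  rw [hpq.sub_one_add_one_div] at hkernel
  exact norm_setIntegral_smul_le hpq hf hac htb
    (by fun_prop : Measurable fun ξ : ℝ => (t - ξ) ^ (α - 1)).aestronglyMeasurable
    (div_nonneg (Real.rpow_nonneg (sub_nonneg.2 hct) _) (Real.rpow_nonneg (by linarith) _))
    hkernel

lemma norm_Ileft_le (hpq : p.HolderConjugate q) (hpα : 1 / p < α)
    (hf : MemLp f (ENNReal.ofReal p) (μab a b)) (ht : t ∈ Icc a b) :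
    ‖Ileft a α f t‖ ≤
      (t - a) ^ (α - 1 / p) / (Real.Gamma α * ((α - 1) * q + 1) ^ (1 / q)) * LpNorm p a b f := by
  have hΓ : 0 < Real.Gamma α := Real.Gamma_pos_of_pos ((one_div_pos.2 hpq.pos).trans hpα)
  rw [Ileft, intervalIntegral.integral_of_le ht.1, norm_smul, norm_inv,
    Real.norm_of_nonneg hΓ.le]
  calc (Real.Gamma α)⁻¹ * ‖∫ ξ in Ioc a t, (t - ξ) ^ (α - 1) • f ξ‖
      ≤ (Real.Gamma α)⁻¹ *
          ((t - a) ^ (α - 1 / p) / ((α - 1) * q + 1) ^ (1 / q) * LpNorm p a b f) :=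
        mul_le_mul_of_nonneg_left (norm_integral_Ioc_rpow_smul_le hpq hpα hf le_rfl ht.1 ht.2)
          (inv_nonneg.2 hΓ.le)
    _ = _ := by ring

lemma intervalIntegrable_rpow_smul (hpq : p.HolderConjugate q) (hpα : 1 / p < α)
    (hf : MemLp f (ENNReal.ofReal p) (μab a b)) (hac : a ≤ c) (hcd : c ≤ d) (hdb : d ≤ b)
    (hdt : d ≤ t) : IntervalIntegrable (fun ξ => (t - ξ) ^ (α - 1) • f ξ) volume c d := by
  refine (intervalIntegrable_iff_integrableOn_Ioc_of_le hcd).2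
    (integrableOn_Ioc_smul hpq hf hac hdb ⟨(by fun_prop : Measurable fun ξ : ℝ =>
      (t - ξ) ^ (α - 1)).aestronglyMeasurable, ?_⟩)
  exact (eLpNorm_sub_rpow_Ioc_le hpq.symm.pos (hpq.neg_one_lt_sub_one_mul hpα) hcd hdt).trans_lt
    ENNReal.ofReal_lt_top

lemma Ileft_sub_Ileft (hpq : p.HolderConjugate q) (hpα : 1 / p < α)
    (hf : MemLp f (ENNReal.ofReal p) (μab a b)) (has : a ≤ s) (hst : s ≤ t) (htb : t ≤ b) :
    Ileft a α f t - Ileft a α f s = (Real.Gamma α)⁻¹ •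
      ((∫ ξ in s..t, (t - ξ) ^ (α - 1) • f ξ) +
        ∫ ξ in a..s, ((t - ξ) ^ (α - 1) - (s - ξ) ^ (α - 1)) • f ξ) := by
  have hsb := hst.trans htb
  simp only [Ileft, sub_smul]
  rw [← smul_sub, ← integral_add_adjacent_intervals
      (intervalIntegrable_rpow_smul hpq hpα hf le_rfl has hsb hst)
      (intervalIntegrable_rpow_smul hpq hpα hf has hst htb le_rfl),
    intervalIntegral.integral_sub (intervalIntegrable_rpow_smul hpq hpα hf le_rfl has hsb hst)
      (intervalIntegrable_rpow_smul hpq hpα hf le_rfl has hsb le_rfl),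
    add_sub_right_comm, add_comm]

lemma norm_Ileft_sub_Ileft_le (hpq : p.HolderConjugate q) (hpα : 1 / p < α) (hα1 : α ≤ 1)
    (hf : MemLp f (ENNReal.ofReal p) (μab a b)) (has : a ≤ s) (hst : s ≤ t) (htb : t ≤ b) :
    ‖Ileft a α f t - Ileft a α f s‖ ≤
      2 * (t - s) ^ (α - 1 / p) / (Real.Gamma α * ((α - 1) * q + 1) ^ (1 / q)) *
        LpNorm p a b f := by
  have hΓ : 0 < Real.Gamma α := Real.Gamma_pos_of_pos ((one_div_pos.2 hpq.pos).trans hpα)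
  have hγ := hpq.neg_one_lt_sub_one_mul hpα
  have hnear : ‖∫ ξ in s..t, (t - ξ) ^ (α - 1) • f ξ‖ ≤
      (t - s) ^ (α - 1 / p) / ((α - 1) * q + 1) ^ (1 / q) * LpNorm p a b f := by
    rw [intervalIntegral.integral_of_le hst]
    exact norm_integral_Ioc_rpow_smul_le hpq hpα hf has hst htb
  have hfar : ‖∫ ξ in a..s, ((t - ξ) ^ (α - 1) - (s - ξ) ^ (α - 1)) • f ξ‖ ≤
      (t - s) ^ (α - 1 / p) / ((α - 1) * q + 1) ^ (1 / q) * LpNorm p a b f := by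
    have hkernel := eLpNorm_sub_rpow_sub_sub_rpow_Ioc_le hpq.symm.lt.le (by linarith) hγ has hst
    rw [hpq.sub_one_add_one_div] at hkernel
    rw [intervalIntegral.integral_of_le has]
    exact norm_setIntegral_smul_le hpq hf le_rfl (hst.trans htb)
      (by fun_prop : Measurable fun ξ : ℝ =>
        (t - ξ) ^ (α - 1) - (s - ξ) ^ (α - 1)).aestronglyMeasurable
      (div_nonneg (Real.rpow_nonneg (sub_nonneg.2 hst) _) (Real.rpow_nonneg (by linarith) _))
      hkernel
  rw [Ileft_sub_Ileft hpq hpα hf has hst htb, norm_smul, norm_inv, Real.norm_of_nonneg hΓ.le]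
  calc (Real.Gamma α)⁻¹ * ‖(∫ ξ in s..t, (t - ξ) ^ (α - 1) • f ξ) +
        ∫ ξ in a..s, ((t - ξ) ^ (α - 1) - (s - ξ) ^ (α - 1)) • f ξ‖
      ≤ (Real.Gamma α)⁻¹ *
          (2 * ((t - s) ^ (α - 1 / p) / ((α - 1) * q + 1) ^ (1 / q) * LpNorm p a b f)) := by
        gcongr
        exact (norm_add_le _ _).trans (by linarith)
    _ = _ := by ring

lemma holderOnWith_Ileft (hpq : p.HolderConjugate q) (hpα : 1 / p < α) (hα1 : α ≤ 1)
    (hf : MemLp f (ENNReal.ofReal p) (μab a b)) :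
    HolderOnWith
      (2 / (Real.Gamma α * ((α - 1) * q + 1) ^ (1 / q)) * LpNorm p a b f).toNNReal
      (α - 1 / p).toNNReal (Ileft a α f) (Icc a b) := by
  have hC : 0 ≤ 2 / (Real.Gamma α * ((α - 1) * q + 1) ^ (1 / q)) * LpNorm p a b f :=
    mul_nonneg (div_nonneg zero_le_two (hpq.Gamma_mul_rpow_pos hpα).le) ENNReal.toReal_nonneg
  refine holderOnWith_of_dist_le fun x hx y hy => ?_
  rw [Real.coe_toNNReal _ hC, Real.coe_toNNReal _ (by linarith), Real.dist_eq]
  rcases le_total x y with hxy | hyx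
  · rw [dist_comm, dist_eq_norm, abs_sub_comm, abs_of_nonneg (sub_nonneg.2 hxy)]
    exact (norm_Ileft_sub_Ileft_le hpq hpα hα1 hf hx.1 hxy hy.2).trans_eq (by ring)
  · rw [dist_eq_norm, abs_of_nonneg (sub_nonneg.2 hyx)]
    exact (norm_Ileft_sub_Ileft_le hpq hpα hα1 hf hy.1 hyx hx.2).trans_eq (by ring)

end FractionalIntegral

theorem E_embeds_in_C_general (a b : ℝ) (d : ℕ) (α p q : ℝ)
    (hp : 1 < p) (hpα : 1 / p < α) (hα1 : α < 1) (hq : q = p / (p - 1)) :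
    ∀ u : ℝ → EuclideanSpace ℝ (Fin d), MemE a b α p u →
      ∃ v : ℝ → EuclideanSpace ℝ (Fin d),
        ContinuousOn v (Set.Icc a b) ∧ v a = 0 ∧
        (∀ᵐ t ∂(μab a b), v t = u t) ∧
        ∀ t ∈ Set.Icc a b,
          ‖v t‖ ≤ (b - a) ^ (α - 1 / p) / (Real.Gamma α * ((α - 1) * q + 1) ^ (1 / q)) *
            LpNorm p a b (Dleft a α u) := by
  rintro u ⟨-, hf, hae⟩
  have hpq : p.HolderConjugate q := (Real.holderConjugate_iff_eq_conjExponent hp).2 hq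
  refine ⟨Ileft a α (Dleft a α u), (holderOnWith_Ileft hpq hpα hα1.le hf).continuousOn ?_,
    by simp [Ileft], hae, fun t ht => (norm_Ileft_le hpq hpα hf ht).trans ?_⟩
  · simpa using hpα
  · have := hpq.Gamma_mul_rpow_pos hpα
    gcongr
    · exact ENNReal.toReal_nonneg
    · exact sub_nonneg.2 ht.1
    · exact ht.2

/-- for `0 < 1/p < α < 1`, every `u ∈ E_{α,p}` has a continuous
representative vanishing at `a`, and the embedding `E_{α,p} ↪ C([a,b];ℝ^d)` is
continuous: `‖u‖_∞ ≤ ((b-a)^{α-1/p}/(Γ(α)((α-1)q+1)^{1/q})) ‖D^α_- u‖_{L^p}`,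
`q = p/(p-1)`. -/
theorem E_embeds_in_C (a b : ℝ) (hab : a < b) (d : ℕ) (α p q : ℝ)
    (hp : 1 < p) (hpα : 1 / p < α) (hα1 : α < 1) (hq : q = p / (p - 1)) :
    ∀ u : ℝ → EuclideanSpace ℝ (Fin d), MemE a b α p u →
      ∃ v : ℝ → EuclideanSpace ℝ (Fin d),
        ContinuousOn v (Set.Icc a b) ∧ v a = 0 ∧
        (∀ᵐ t ∂(μab a b), v t = u t) ∧
        ∀ t ∈ Set.Icc a b,
          ‖v t‖ ≤ (b - a) ^ (α - 1 / p) / (Real.Gamma α * ((α - 1) * q + 1) ^ (1 / q)) *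
            LpNorm p a b (Dleft a α u) :=
  E_embeds_in_C_general a b d α p q hp hpα hα1 hq
end
end

section
/- Let 0 < 1/p < α < 1 and let (u_n) be a sequence in E_{α,p} with (‖D^α_- u_n‖_{L^p}) bounded by M. Then the continuous representatives u_n are uniformly Hölder: for all n and all a ≤ t₁ < t₂ ≤ b, ‖u_n(t₂) - u_n(t₁)‖ ≤ (2M / (Γ(α)((α-1)q+1)^{1/q})) (t₂-t₁)^{α-1/p}, where q = p/(p-1); hence (u_n) is relatively compact in C([a,b];ℝ^d) by Ascoli's theorem. -/
open MeasureTheory Set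

/-!
Write `k s = s ^ (α - 1)`. Splitting the integrals at `t₁`,
`Γ(α) (I^α f t₂ - I^α f t₁) = ∫_a^{t₁} (k (t₂ - ξ) - k (t₁ - ξ)) f ξ + ∫_{t₁}^{t₂} k (t₂ - ξ) f ξ`,
and by Hölder each term is at most `‖f‖_p` times the `L^q` norm of its kernel. With
`K = (α - 1) q + 1 = q (α - 1/p) > 0`, both kernels have `∫ |·|^q ≤ (t₂ - t₁)^K / K`: for the
second this is an equality, for the first it follows from `(x - y)^q ≤ x^q - y^q` (`0 ≤ y ≤ x`,
`q ≥ 1`) because `k` is decreasing, after which the integral telescopes. The functions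
`I^α(D^α uₙ)` are therefore uniformly Hölder and vanish at `a`, hence equicontinuous and uniformly
bounded on `[a, b]`, and Arzelà–Ascoli yields a uniformly convergent subsequence.
-/

open Filter Topology

lemma Real.sub_rpow_le_rpow_sub_rpow {x y q : ℝ} (hy : 0 ≤ y) (hyx : y ≤ x) (hq : 1 ≤ q) :
    (x - y) ^ q ≤ x ^ q - y ^ q := by
  have h := Real.add_rpow_le_rpow_add (sub_nonneg.mpr hyx) hy hq
  rw [sub_add_cancel] at h
  linarith

lemma Real.abs_rpow_rpow_of_nonneg {x s q : ℝ} (hx : 0 ≤ x) : |x ^ s| ^ q = x ^ (s * q) := by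
  rw [abs_of_nonneg (Real.rpow_nonneg hx _), ← Real.rpow_mul hx]

lemma Real.HolderConjugate.sub_one_mul_add_one {p q : ℝ} (hpq : p.HolderConjugate q) (α : ℝ) :
    (α - 1) * q + 1 = q * (α - 1 / p) := by
  have hp : 1 / p = 1 - 1 / q := by
    rw [one_div, one_div, ← hpq.inv_add_inv_eq_one, add_sub_cancel_right]
  rw [hp, mul_sub, mul_one_sub, mul_one_div_cancel hpq.symm.pos.ne']
  ring

lemma integral_Ioo_sub_rpow {τ c e s : ℝ} (hs : -1 < s) (hce : c ≤ e) :
    ∫ ξ in Ioo c e, (τ - ξ) ^ s = ((τ - c) ^ (s + 1) - (τ - e) ^ (s + 1)) / (s + 1) := by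
  rw [← integral_Ioc_eq_integral_Ioo, ← intervalIntegral.integral_of_le hce,
    intervalIntegral.integral_comp_sub_left (fun x : ℝ => x ^ s), integral_rpow (Or.inl hs)]

lemma integrableOn_Ioo_sub_rpow {τ c e s : ℝ} (hs : -1 < s) (hce : c ≤ e) :
    IntegrableOn (fun ξ => (τ - ξ) ^ s) (Ioo c e) := by
  have h :=
    (intervalIntegral.intervalIntegrable_rpow' hs (a := τ - e) (b := τ - c)).comp_sub_left τ
  simp only [sub_sub_cancel] at h
  exact (intervalIntegrable_iff_integrableOn_Ioo_of_le hce).mp h.symm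

lemma memLp_Ioo_sub_rpow {τ c e s q : ℝ} (hq : 0 < q) (hsq : -1 < s * q) (hce : c ≤ e)
    (heτ : e ≤ τ) :
    MemLp (fun ξ => (τ - ξ) ^ s) (ENNReal.ofReal q) (volume.restrict (Ioo c e)) := by
  have hmeas : Measurable fun ξ : ℝ => (τ - ξ) ^ s := by fun_prop
  refine (integrable_norm_rpow_iff hmeas.aestronglyMeasurable (by simpa using hq)
    ENNReal.ofReal_ne_top).mp ?_
  rw [ENNReal.toReal_ofReal hq.le]
  refine (integrableOn_Ioo_sub_rpow (τ := τ) hsq hce).congr_fun (fun ξ hξ => ?_) measurableSet_Ioo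
  rw [Real.norm_eq_abs, Real.abs_rpow_rpow_of_nonneg (sub_nonneg.mpr (hξ.2.le.trans heτ))]

section Holder

variable {V : Type*} [NormedAddCommGroup V] [NormedSpace ℝ V]

lemma norm_integral_smul_le_of_holderConjugate {X : Type*} [MeasurableSpace X] {μ : Measure X}
    {p q : ℝ} (hpq : p.HolderConjugate q) {g : X → ℝ} {f : X → V}
    (hg : MemLp g (ENNReal.ofReal q) μ) (hf : MemLp f (ENNReal.ofReal p) μ) :
    ‖∫ x, g x • f x ∂μ‖ ≤
      (∫ x, |g x| ^ q ∂μ) ^ (1 / q) * (eLpNorm f (ENNReal.ofReal p) μ).toReal := by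
  have hp : 0 < p := hpq.pos
  calc ‖∫ x, g x • f x ∂μ‖ ≤ ∫ x, ‖g x‖ * ‖f x‖ ∂μ := by
        simpa only [norm_smul] using norm_integral_le_integral_norm (fun x => g x • f x)
    _ ≤ (∫ x, ‖g x‖ ^ q ∂μ) ^ (1 / q) * (∫ x, ‖f x‖ ^ p ∂μ) ^ (1 / p) := by
        simpa only [norm_norm] using integral_mul_norm_le_Lp_mul_Lq hpq.symm hg.norm hf.norm
    _ = _ := by
        rw [hf.eLpNorm_eq_integral_rpow_norm (by simpa using hp) ENNReal.ofReal_ne_top,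
          ENNReal.toReal_ofReal hp.le, ENNReal.toReal_ofReal (by positivity), one_div p]
        simp only [Real.norm_eq_abs]

lemma μab_restrict_of_subset {a b c e : ℝ} (h : Ioo c e ⊆ Ioo a b) :
    (μab a b).restrict (Ioo c e) = volume.restrict (Ioo c e) := by
  rw [μab, Measure.restrict_restrict measurableSet_Ioo, inter_eq_left.mpr h]

variable {a b c e p q : ℝ} {g : ℝ → ℝ} {f : ℝ → V}

lemma intervalIntegrable_smul_of_memLp (hpq : p.HolderConjugate q) (hce : c ≤ e)
    (hsub : Ioo c e ⊆ Ioo a b) (hg : MemLp g (ENNReal.ofReal q) (volume.restrict (Ioo c e)))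
    (hf : MemLp f (ENNReal.ofReal p) (μab a b)) :
    IntervalIntegrable (fun ξ => g ξ • f ξ) volume c e := by
  have hf' := μab_restrict_of_subset hsub ▸ hf.restrict (Ioo c e)
  have := hpq.symm.ennrealOfReal
  rw [intervalIntegrable_iff_integrableOn_Ioo_of_le hce, IntegrableOn, ← memLp_one_iff_integrable]
  exact hf'.smul hg

lemma norm_intervalIntegral_smul_le (hpq : p.HolderConjugate q) (hce : c ≤ e)
    (hsub : Ioo c e ⊆ Ioo a b) (hg : MemLp g (ENNReal.ofReal q) (volume.restrict (Ioo c e)))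
    {B : ℝ} (hgB : ∫ ξ in Ioo c e, |g ξ| ^ q ≤ B) (hf : MemLp f (ENNReal.ofReal p) (μab a b)) :
    ‖∫ ξ in c..e, g ξ • f ξ‖ ≤ B ^ (1 / q) * LpNorm p a b f := by
  have hf' := μab_restrict_of_subset hsub ▸ hf.restrict (Ioo c e)
  rw [intervalIntegral.integral_of_le hce, integral_Ioc_eq_integral_Ioo]
  refine (norm_integral_smul_le_of_holderConjugate hpq hg hf').trans ?_
  have hnonneg : 0 ≤ ∫ ξ in Ioo c e, |g ξ| ^ q := integral_nonneg fun _ => by positivity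
  refine mul_le_mul (Real.rpow_le_rpow hnonneg hgB (one_div_nonneg.mpr hpq.symm.nonneg)) ?_
    ENNReal.toReal_nonneg (Real.rpow_nonneg (hnonneg.trans hgB) _)
  rw [← μab_restrict_of_subset hsub]
  exact ENNReal.toReal_mono hf.eLpNorm_ne_top (eLpNorm_restrict_le _ _ _ _)

end Holder

section Kernel

variable {a t₁ t₂ s q : ℝ}

lemma setIntegral_abs_sub_rpow_eq (hK : 0 < s * q + 1) (h12 : t₁ ≤ t₂) :
    ∫ ξ in Ioo t₁ t₂, |(t₂ - ξ) ^ s| ^ q = (t₂ - t₁) ^ (s * q + 1) / (s * q + 1) := by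
  rw [setIntegral_congr_fun measurableSet_Ioo fun ξ hξ =>
    Real.abs_rpow_rpow_of_nonneg (sub_nonneg.mpr hξ.2.le),
    integral_Ioo_sub_rpow (by linarith) h12, sub_self, Real.zero_rpow hK.ne', sub_zero]

lemma setIntegral_abs_sub_rpow_sub_rpow_le (hs : s ≤ 0) (hq : 1 ≤ q) (hK : 0 < s * q + 1)
    (h1 : a ≤ t₁) (h12 : t₁ ≤ t₂) :
    ∫ ξ in Ioo a t₁, |(t₂ - ξ) ^ s - (t₁ - ξ) ^ s| ^ q ≤
      (t₂ - t₁) ^ (s * q + 1) / (s * q + 1) := by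
  have hsq : -1 < s * q := by linarith
  have pointwise : ∀ ξ ∈ Ioo a t₁, |(t₂ - ξ) ^ s - (t₁ - ξ) ^ s| ^ q ≤
      (t₁ - ξ) ^ (s * q) - (t₂ - ξ) ^ (s * q) := by
    intro ξ hξ
    have hξ₁ : 0 < t₁ - ξ := sub_pos.mpr hξ.2
    have hanti : (t₂ - ξ) ^ s ≤ (t₁ - ξ) ^ s :=
      Real.rpow_le_rpow_of_nonpos hξ₁ (by linarith) hs
    rw [abs_sub_comm, abs_of_nonneg (sub_nonneg.mpr hanti), Real.rpow_mul hξ₁.le,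
      Real.rpow_mul (by linarith)]
    exact Real.sub_rpow_le_rpow_sub_rpow (Real.rpow_nonneg (by linarith) _) hanti hq
  have hint : IntegrableOn (fun ξ => (t₁ - ξ) ^ (s * q) - (t₂ - ξ) ^ (s * q)) (Ioo a t₁) :=
    (integrableOn_Ioo_sub_rpow hsq h1).sub (integrableOn_Ioo_sub_rpow hsq h1)
  calc ∫ ξ in Ioo a t₁, |(t₂ - ξ) ^ s - (t₁ - ξ) ^ s| ^ q
      ≤ ∫ ξ in Ioo a t₁, ((t₁ - ξ) ^ (s * q) - (t₂ - ξ) ^ (s * q)) := by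
        refine integral_mono_of_nonneg (Eventually.of_forall fun _ => by positivity) hint ?_
        exact (ae_restrict_iff' measurableSet_Ioo).mpr (Eventually.of_forall pointwise)
    _ = ((t₁ - a) ^ (s * q + 1) - (t₂ - a) ^ (s * q + 1) + (t₂ - t₁) ^ (s * q + 1)) /
          (s * q + 1) := by
        rw [integral_sub (integrableOn_Ioo_sub_rpow hsq h1) (integrableOn_Ioo_sub_rpow hsq h1),
          integral_Ioo_sub_rpow hsq h1, integral_Ioo_sub_rpow hsq h1, sub_self,
          Real.zero_rpow hK.ne']
        ring
    _ ≤ (t₂ - t₁) ^ (s * q + 1) / (s * q + 1) := by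
        gcongr
        linarith [Real.rpow_le_rpow (by linarith) (by linarith : t₁ - a ≤ t₂ - a) hK.le]

end Kernel

section FractionalIntegral

variable {V : Type*} [NormedAddCommGroup V] [NormedSpace ℝ V] {a b α p q : ℝ} {f : ℝ → V}

lemma Ileft_sub_Ileft_s14 {t₁ t₂ : ℝ}
    (h₂a : IntervalIntegrable (fun ξ => (t₂ - ξ) ^ (α - 1) • f ξ) volume a t₁)
    (h₂b : IntervalIntegrable (fun ξ => (t₂ - ξ) ^ (α - 1) • f ξ) volume t₁ t₂)
    (h₁a : IntervalIntegrable (fun ξ => (t₁ - ξ) ^ (α - 1) • f ξ) volume a t₁) :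
    Ileft a α f t₂ - Ileft a α f t₁ = (Real.Gamma α)⁻¹ •
      ((∫ ξ in a..t₁, ((t₂ - ξ) ^ (α - 1) - (t₁ - ξ) ^ (α - 1)) • f ξ) +
        ∫ ξ in t₁..t₂, (t₂ - ξ) ^ (α - 1) • f ξ) := by
  simp only [Ileft, sub_smul]
  rw [← smul_sub, intervalIntegral.integral_sub h₂a h₁a,
    ← intervalIntegral.integral_add_adjacent_intervals h₂a h₂b]
  abel_nf

lemma Ileft_self : Ileft a α f a = 0 := by
  simp only [Ileft, intervalIntegral.integral_same, smul_zero]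

lemma norm_Ileft_sub_le (hpq : p.HolderConjugate q) (hpα : 1 / p < α) (hα1 : α < 1)
    (hf : MemLp f (ENNReal.ofReal p) (μab a b)) {t₁ t₂ : ℝ} (h1 : a ≤ t₁) (h12 : t₁ ≤ t₂)
    (h2 : t₂ ≤ b) :
    ‖Ileft a α f t₂ - Ileft a α f t₁‖ ≤ 2 * LpNorm p a b f /
      (Real.Gamma α * ((α - 1) * q + 1) ^ (1 / q)) * (t₂ - t₁) ^ (α - 1 / p) := by
  set K := (α - 1) * q + 1
  have hq : 0 < q := hpq.symm.pos
  have hKq : K = q * (α - 1 / p) := hpq.sub_one_mul_add_one α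
  have hKpos : 0 < K := hKq ▸ mul_pos hq (sub_pos.mpr hpα)
  have hsq : -1 < (α - 1) * q := by linarith
  have hΓ : 0 < Real.Gamma α := Real.Gamma_pos_of_pos ((one_div_pos.mpr hpq.pos).trans hpα)
  have hsub₁ : Ioo a t₁ ⊆ Ioo a b := Ioo_subset_Ioo_right (h12.trans h2)
  have hsub₂ : Ioo t₁ t₂ ⊆ Ioo a b := Ioo_subset_Ioo h1 h2
  have hk₂a := memLp_Ioo_sub_rpow (τ := t₂) hq hsq h1 h12
  have hk₂b := memLp_Ioo_sub_rpow (τ := t₂) hq hsq h12 le_rfl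
  have hk₁a := memLp_Ioo_sub_rpow (τ := t₁) hq hsq h1 le_rfl
  have boundA := norm_intervalIntegral_smul_le hpq h1 hsub₁ (hk₂a.sub hk₁a)
    (setIntegral_abs_sub_rpow_sub_rpow_le (by linarith) hpq.symm.lt.le hKpos h1 h12) hf
  have boundB := norm_intervalIntegral_smul_le hpq h12 hsub₂ hk₂b
    (setIntegral_abs_sub_rpow_eq hKpos h12).le hf
  have hW : ((t₂ - t₁) ^ K / K) ^ (1 / q) = (t₂ - t₁) ^ (α - 1 / p) / K ^ (1 / q) := by
    rw [Real.div_rpow (by positivity) hKpos.le, ← Real.rpow_mul (by linarith), hKq]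
    field_simp
  rw [Ileft_sub_Ileft_s14 (intervalIntegrable_smul_of_memLp hpq h1 hsub₁ hk₂a hf)
    (intervalIntegrable_smul_of_memLp hpq h12 hsub₂ hk₂b hf)
    (intervalIntegrable_smul_of_memLp hpq h1 hsub₁ hk₁a hf), norm_smul, Real.norm_eq_abs,
    abs_of_pos (inv_pos.mpr hΓ)]
  calc (Real.Gamma α)⁻¹ * ‖_ + _‖
      ≤ (Real.Gamma α)⁻¹ * (((t₂ - t₁) ^ K / K) ^ (1 / q) * LpNorm p a b f +
          ((t₂ - t₁) ^ K / K) ^ (1 / q) * LpNorm p a b f) := by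
        gcongr
        exact (norm_add_le _ _).trans (add_le_add boundA boundB)
    _ = _ := by
        rw [hW]
        field_simp
        ring

end FractionalIntegral

section Ascoli

open scoped BoundedContinuousFunction

lemma Equicontinuous.exists_tendstoUniformly_subseq {X E : Type*} [TopologicalSpace X]
    [CompactSpace X] [MetricSpace E] {F : ℕ → X → E} (hF : Equicontinuous F) {s : Set E}
    (hs : IsCompact s) (hFs : ∀ n x, F n x ∈ s) :
    ∃ φ : ℕ → ℕ, StrictMono φ ∧
      ∃ g : X → E, Continuous g ∧ TendstoUniformly (fun k => F (φ k)) g atTop := by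
  let G : ℕ → X →ᵇ E := fun n => .mkOfCompact ⟨F n, hF.continuous n⟩
  have hG : IsCompact (closure (range G)) := by
    refine BoundedContinuousFunction.arzela_ascoli s hs _ ?_ ?_
    · rintro _ x ⟨n, rfl⟩
      exact hFs n x
    · intro x U hU
      filter_upwards [hF x U hU] with y hy
      rintro ⟨_, n, rfl⟩
      exact hy n
  obtain ⟨L, -, φ, hφ, hlim⟩ := hG.tendsto_subseq fun n => subset_closure (mem_range_self n)
  exact ⟨φ, hφ, L, L.continuous, BoundedContinuousFunction.tendsto_iff_tendstoUniformly.mp hlim⟩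

variable {E : Type*} [NormedAddCommGroup E] {a b C β : ℝ}

lemma dist_le_mul_dist_rpow_of_forall_lt (hβ : 0 < β) {f : ℝ → E}
    (hf : ∀ t₁ t₂, a ≤ t₁ → t₁ < t₂ → t₂ ≤ b → ‖f t₂ - f t₁‖ ≤ C * (t₂ - t₁) ^ β) {x y : ℝ}
    (hx : x ∈ Icc a b) (hy : y ∈ Icc a b) : dist (f x) (f y) ≤ C * dist x y ^ β := by
  wlog hyx : y ≤ x generalizing x y
  · rw [dist_comm, dist_comm x]
    exact this hy hx (le_of_not_ge hyx)
  rcases hyx.eq_or_lt with rfl | hlt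
  · simp [Real.zero_rpow hβ.ne']
  rw [dist_eq_norm, Real.dist_eq, abs_of_pos (sub_pos.mpr hlt)]
  exact hf y x hy.1 hlt hx.2

lemma exists_tendstoUniformlyOn_subseq_of_holder [ProperSpace E] (hC : 0 ≤ C) (hβ : 0 < β)
    {v : ℕ → ℝ → E}
    (hv : ∀ n t₁ t₂, a ≤ t₁ → t₁ < t₂ → t₂ ≤ b → ‖v n t₂ - v n t₁‖ ≤ C * (t₂ - t₁) ^ β)
    {R : ℝ} (hva : ∀ n, ‖v n a‖ ≤ R) :
    ∃ φ : ℕ → ℕ, StrictMono φ ∧ ∃ g : ℝ → E, ContinuousOn g (Icc a b) ∧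
      TendstoUniformlyOn (fun k => v (φ k)) g atTop (Icc a b) := by
  have hmod : Tendsto (fun r : ℝ => C * r ^ β) (𝓝 0) (𝓝 0) := by
    simpa [Real.zero_rpow hβ.ne'] using
      ((Real.continuous_rpow_const hβ.le).const_mul C).tendsto 0
  have hequi : Equicontinuous fun n => (Icc a b).domRestrict (v n) :=
    Metric.equicontinuous_of_continuity_modulus _ hmod _ fun x y n =>
      dist_le_mul_dist_rpow_of_forall_lt hβ (hv n) x.2 y.2
  have hbound : ∀ n (x : Icc a b), (Icc a b).domRestrict (v n) x ∈
      Metric.closedBall 0 (R + C * (b - a) ^ β) := by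
    intro n x
    have ha : a ∈ Icc a b := left_mem_Icc.mpr (x.2.1.trans x.2.2)
    have hxa : dist (x : ℝ) a ≤ b - a := by
      rw [Real.dist_eq, abs_of_nonneg (sub_nonneg.mpr x.2.1)]
      linarith [x.2.2]
    rw [Metric.mem_closedBall, dist_zero_right, domRestrict_apply]
    calc ‖v n x‖ ≤ ‖v n a‖ + dist (v n x) (v n a) := by
          simpa only [dist_eq_norm] using norm_le_norm_add_norm_sub' (v n x) (v n a)
      _ ≤ R + C * (b - a) ^ β := by
        gcongr
        · exact hva n
        · exact (dist_le_mul_dist_rpow_of_forall_lt hβ (hv n) x.2 ha).trans (by gcongr)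
  obtain ⟨φ, hφ, g, hg, hlim⟩ :=
    hequi.exists_tendstoUniformly_subseq (isCompact_closedBall _ _) hbound
  have hrestrict : (Icc a b).domRestrict (Function.extend Subtype.val g 0) = g :=
    funext fun x => Subtype.val_injective.extend_apply g 0 x
  refine ⟨φ, hφ, Function.extend Subtype.val g 0, ?_, ?_⟩
  · rwa [continuousOn_iff_continuous_domRestrict, hrestrict]
  · rwa [tendstoUniformlyOn_iff_tendstoUniformly_comp_coe, ← domRestrict_eq, hrestrict]

end Ascoli

theorem E_bounded_seq_uniformly_holder_general (a b : ℝ) (d : ℕ) (α p q M : ℝ)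
    (hp : 1 < p) (hpα : 1 / p < α) (hα1 : α < 1) (hq : q = p / (p - 1)) (hM : 0 ≤ M)
    (u : ℕ → ℝ → EuclideanSpace ℝ (Fin d)) (hmem : ∀ n, MemE a b α p (u n))
    (hbd : ∀ n, LpNorm p a b (Dleft a α (u n)) ≤ M) :
    (∀ n, ∀ t₁ t₂ : ℝ, a ≤ t₁ → t₁ < t₂ → t₂ ≤ b →
      ‖Ileft a α (Dleft a α (u n)) t₂ - Ileft a α (Dleft a α (u n)) t₁‖ ≤
        2 * M / (Real.Gamma α * ((α - 1) * q + 1) ^ (1 / q)) * (t₂ - t₁) ^ (α - 1 / p)) ∧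
    ∃ φ : ℕ → ℕ, StrictMono φ ∧
      ∃ g : ℝ → EuclideanSpace ℝ (Fin d), ContinuousOn g (Set.Icc a b) ∧
        TendstoUniformlyOn (fun k => Ileft a α (Dleft a α (u (φ k)))) g Filter.atTop
          (Set.Icc a b) := by
  have hpq : p.HolderConjugate q := (Real.holderConjugate_iff_eq_conjExponent hp).mpr hq
  have hK : 0 < (α - 1) * q + 1 :=
    hpq.sub_one_mul_add_one α ▸ mul_pos hpq.symm.pos (sub_pos.mpr hpα)
  have hΓ : 0 < Real.Gamma α := Real.Gamma_pos_of_pos ((one_div_pos.mpr hpq.pos).trans hpα)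
  have holder : ∀ n, ∀ t₁ t₂ : ℝ, a ≤ t₁ → t₁ < t₂ → t₂ ≤ b →
      ‖Ileft a α (Dleft a α (u n)) t₂ - Ileft a α (Dleft a α (u n)) t₁‖ ≤
        2 * M / (Real.Gamma α * ((α - 1) * q + 1) ^ (1 / q)) * (t₂ - t₁) ^ (α - 1 / p) :=
    fun n t₁ t₂ h1 h12 h2 => (norm_Ileft_sub_le hpq hpα hα1 (hmem n).2.1 h1 h12.le h2).trans <| by
      have : 0 ≤ (t₂ - t₁) ^ (α - 1 / p) := Real.rpow_nonneg (sub_nonneg.mpr h12.le) _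
      gcongr
      exact hbd n
  refine ⟨holder, exists_tendstoUniformlyOn_subseq_of_holder (by positivity) (sub_pos.mpr hpα)
    holder (R := 0) fun n => ?_⟩
  rw [Ileft_self, norm_zero]

/-- for `0 < 1/p < α < 1`, a sequence `(uₙ) ⊂ E_{α,p}` with
`‖D^α_- uₙ‖_{L^p} ≤ M` has uniformly Hölder continuous representatives:
`‖uₙ(t₂) - uₙ(t₁)‖ ≤ (2M/(Γ(α)((α-1)q+1)^{1/q}))(t₂-t₁)^{α-1/p}` with `q = p/(p-1)`;
hence, by Ascoli's theorem, `(uₙ)` is relatively compact in `C([a,b];ℝ^d)`: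
some subsequence converges uniformly on `[a,b]`. -/
theorem E_bounded_seq_uniformly_holder (a b : ℝ) (hab : a < b) (d : ℕ) (α p q M : ℝ)
    (hp : 1 < p) (hpα : 1 / p < α) (hα1 : α < 1) (hq : q = p / (p - 1)) (hM : 0 ≤ M)
    (u : ℕ → ℝ → EuclideanSpace ℝ (Fin d)) (hmem : ∀ n, MemE a b α p (u n))
    (hbd : ∀ n, LpNorm p a b (Dleft a α (u n)) ≤ M) :
    (∀ n, ∀ t₁ t₂ : ℝ, a ≤ t₁ → t₁ < t₂ → t₂ ≤ b →
      ‖Ileft a α (Dleft a α (u n)) t₂ - Ileft a α (Dleft a α (u n)) t₁‖ ≤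
        2 * M / (Real.Gamma α * ((α - 1) * q + 1) ^ (1 / q)) * (t₂ - t₁) ^ (α - 1 / p)) ∧
    ∃ φ : ℕ → ℕ, StrictMono φ ∧
      ∃ g : ℝ → EuclideanSpace ℝ (Fin d), ContinuousOn g (Set.Icc a b) ∧
        TendstoUniformlyOn (fun k => Ileft a α (Dleft a α (u (φ k)))) g Filter.atTop
          (Set.Icc a b) :=
  E_bounded_seq_uniformly_holder_general a b d α p q M hp hpα hα1 hq hM u hmem hbd
end
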